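/- arXiv:math/0502237 — 4 statements merged into one kernel-verified Lean document; each statement's English description precedes it below -/
import Mathlib

section
/- Let ρ be a unitary representation of a group G on a Hilbert space H and v a unit vector. If there exists δ < √2 such that ‖ρ(g)v - v‖ < δ for every g ∈ G, then H contains a nonzero G-invariant vector. -/
open scoped RealInnerProductSpace

theorem stmt_2 {G : Type*} [Group G] {H : Type*} [NormedAddCommGroup H]
    [InnerProductSpace ℂ H] [CompleteSpace H]
    (ρ : G →* (H ≃ₗᵢ[ℂ] H)) (v : H) (hv : ‖v‖ = 1)
    (δ : ℝ) (hδ : δ < Real.sqrt 2) (hmove : ∀ g : G, ‖ρ g v - v‖ < δ) :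
    ∃ w : H, w ≠ 0 ∧ ∀ g : G, ρ g w = w := by
  letI : InnerProductSpace ℝ H := InnerProductSpace.complexToReal
  -- δ is positive and δ² < 2
  have hδ0 : 0 < δ := by simpa using hmove 1
  have hδ2 : δ ^ 2 < 2 := by
    have h2 : Real.sqrt 2 ^ 2 = 2 := Real.sq_sqrt (by norm_num)
    calc δ ^ 2 < Real.sqrt 2 ^ 2 := by
          exact pow_lt_pow_left₀ hδ hδ0.le two_ne_zero
      _ = 2 := h2
  set S : Set H := Set.range (fun g : G => ρ g v) with hS
  set K : Set H := closure (convexHull ℝ S) with hK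
  have hSK : S ⊆ K := (subset_convexHull ℝ S).trans subset_closure
  have hSne : S.Nonempty := ⟨v, 1, by simp⟩
  have hKconv : Convex ℝ K := (convex_convexHull ℝ S).closure
  have hKne : K.Nonempty := hSne.mono hSK
  obtain ⟨w, hwK, hwmin⟩ := exists_norm_eq_iInf_of_complete_convex hKne
    isClosed_closure.isComplete hKconv 0
  -- uniqueness of the minimizer
  have huniq : ∀ w' ∈ K, (‖(0:H) - w'‖ = ⨅ x : K, ‖(0:H) - x‖) → w' = w := by
    intro w' hw'K hw'
    have h1 := (norm_eq_iInf_iff_real_inner_le_zero hKconv hwK).mp hwmin w' hw'K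
    have h2 := (norm_eq_iInf_iff_real_inner_le_zero hKconv hw'K).mp hw' w hwK
    rw [zero_sub, inner_neg_left] at h1 h2
    have hsum : ⟪w' - w, w' - w⟫ ≤ 0 := by
      have heq : -⟪w, w' - w⟫ + -⟪w', w - w'⟫ = ⟪w' - w, w' - w⟫ := by
        rw [inner_sub_left, inner_sub_right, inner_sub_right, inner_sub_right,
          real_inner_comm w w']
        ring
      linarith
    have := real_inner_self_nonpos.mp hsum
    exact sub_eq_zero.mp this
  -- K is invariant under each ρ g
  have hKinv : ∀ g : G, ∀ x ∈ K, ρ g x ∈ K := by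
    intro g x hx
    have hmul : ∀ a b : G, ∀ x : H, ρ a (ρ b x) = ρ (a * b) x := by
      intro a b x
      rw [map_mul]
      rfl
    have hfS : (ρ g : H → H) '' S = S := by
      ext y
      constructor
      · rintro ⟨_, ⟨h, rfl⟩, rfl⟩
        exact ⟨g * h, (hmul g h v).symm⟩
      · rintro ⟨h, rfl⟩
        exact ⟨ρ (g⁻¹ * h) v, ⟨g⁻¹ * h, rfl⟩, by
          rw [hmul, mul_inv_cancel_left]⟩
    have hlin : (ρ g : H → H) '' convexHull ℝ S = convexHull ℝ S := by
      have h2 : (⇑(((ρ g).toLinearEquiv.toLinearMap).restrictScalars ℝ) : H → H)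
          = ⇑(ρ g) := rfl
      have h3 := LinearMap.image_convexHull
        (((ρ g).toLinearEquiv.toLinearMap).restrictScalars ℝ) S
      rw [← h2, h3, h2, hfS]
    have hcl : (ρ g : H → H) '' K = K := by
      have hcoe : (⇑(ρ g).toHomeomorph : H → H) = ⇑(ρ g) := rfl
      rw [hK, ← hcoe, Homeomorph.image_closure, hcoe, hlin]
    rw [← hcl]
    exact ⟨x, hx, rfl⟩
  -- the minimizer is invariant
  have hinv : ∀ g : G, ρ g w = w := by
    intro g
    refine huniq (ρ g w) (hKinv g w hwK) ?_
    rw [zero_sub, norm_neg, (ρ g).norm_map, ← norm_neg, ← zero_sub]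
    exact hwmin
  -- the minimizer is nonzero: K lies in a half-space
  have hc : ∀ x ∈ K, 1 - δ ^ 2 / 2 ≤ ⟪v, x⟫ := by
    have hCconv : Convex ℝ {x : H | 1 - δ ^ 2 / 2 ≤ ⟪v, x⟫} :=
      convex_halfSpace_ge ⟨fun a b => inner_add_right _ _ _,
        fun c a => real_inner_smul_right _ _ _⟩ _
    have hCclosed : IsClosed {x : H | 1 - δ ^ 2 / 2 ≤ ⟪v, x⟫} :=
      isClosed_le continuous_const (continuous_const.inner continuous_id)
    have hSC : S ⊆ {x : H | 1 - δ ^ 2 / 2 ≤ ⟪v, x⟫} := by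
      rintro _ ⟨g, rfl⟩
      have h1 : ‖ρ g v‖ = 1 := by rw [(ρ g).norm_map, hv]
      have hsq : ‖ρ g v - v‖ ^ 2 < δ ^ 2 :=
        pow_lt_pow_left₀ (hmove g) (norm_nonneg _) two_ne_zero
      rw [norm_sub_sq_real, h1, hv] at hsq
      have := real_inner_comm (ρ g v) v
      simp only [Set.mem_setOf_eq]
      nlinarith
    intro x hx
    exact closure_minimal (convexHull_min hSC hCconv) hCclosed hx
  refine ⟨w, ?_, hinv⟩
  intro h0
  have := hc w hwK
  rw [h0, inner_zero_right] at this
  nlinarith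
end

section
/- Let μ be a finitely additive probability-bounded measure on a measurable space X, A and B measurable sets, and suppose A is the disjoint union of measurable sets A_1, ..., A_s and there are measurable bijections (coming from a group action almost preserving μ) mapping A_i onto disjoint subsets B_i of B with |μ(B_i) - μ(A_i)| ≤ 2ε·sqrt(μ(B_i)) + ε² for each i. Then sqrt(μ(A)) ≤ sqrt(μ(B)) + sqrt(s)·ε. -/
theorem stmt_6 {X : Type*} [MeasurableSpace X]
    (μ : Set X → ℝ) (hpos : ∀ B : Set X, 0 ≤ μ B)
    (hadd : ∀ (n : ℕ) (C : Fin n → Set X), (∀ i, MeasurableSet (C i)) →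
      Pairwise (Function.onFun Disjoint C) → μ (⋃ i, C i) = ∑ i, μ (C i))
    (hmono : ∀ S T : Set X, MeasurableSet S → MeasurableSet T → S ⊆ T → μ S ≤ μ T)
    (ε : ℝ) (hε : 0 ≤ ε)
    (s : ℕ) (A B : Set X) (A' B' : Fin s → Set X)
    (hAmeas : MeasurableSet A) (hBmeas : MeasurableSet B)
    (hA'meas : ∀ i, MeasurableSet (A' i)) (hB'meas : ∀ i, MeasurableSet (B' i))
    (hAunion : A = ⋃ i, A' i) (hA'disj : Pairwise (Function.onFun Disjoint A'))
    (hB'disj : Pairwise (Function.onFun Disjoint B'))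
    (hB'sub : ∀ i, B' i ⊆ B)
    (hmoved : ∀ i, μ (A' i) ≤ μ (B' i) + 2 * ε * Real.sqrt (μ (B' i)) + ε ^ 2) :
    Real.sqrt (μ A) ≤ Real.sqrt (μ B) + Real.sqrt s * ε := by
  have hb : ∀ i, 0 ≤ μ (B' i) := fun i => hpos _
  have hsum : μ A = ∑ i, μ (A' i) := by
    rw [hAunion]; exact hadd s A' hA'meas hA'disj
  have hBsum : ∑ i, μ (B' i) ≤ μ B := by
    rw [← hadd s B' hB'meas hB'disj]
    exact hmono _ _ (MeasurableSet.iUnion fun i => hB'meas i) hBmeas (Set.iUnion_subset hB'sub)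
  have hBnn : 0 ≤ μ B := hpos B
  have hCS : ∑ i, Real.sqrt (μ (B' i)) ≤ Real.sqrt s * Real.sqrt (μ B) := by
    have h := Finset.sum_sq_le_sum_mul_sum_of_sq_eq_mul Finset.univ
      (r := fun i => Real.sqrt (μ (B' i))) (f := fun i => μ (B' i)) (g := fun _ => (1:ℝ))
      (fun i _ => hb i) (fun _ _ => zero_le_one) (fun i _ => by simp [Real.sq_sqrt (hb i)])
    have hnn : 0 ≤ ∑ i, Real.sqrt (μ (B' i)) := Finset.sum_nonneg fun i _ => Real.sqrt_nonneg _
    calc ∑ i, Real.sqrt (μ (B' i))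
        = Real.sqrt ((∑ i, Real.sqrt (μ (B' i))) ^ 2) := (Real.sqrt_sq hnn).symm
      _ ≤ Real.sqrt ((∑ i, μ (B' i)) * s) := by
          apply Real.sqrt_le_sqrt; simpa using h
      _ ≤ Real.sqrt (μ B * s) := Real.sqrt_le_sqrt
          (mul_le_mul_of_nonneg_right hBsum (Nat.cast_nonneg s))
      _ = Real.sqrt s * Real.sqrt (μ B) := by
          rw [Real.sqrt_mul (hpos B), mul_comm]
  have hμA : μ A ≤ (Real.sqrt (μ B) + Real.sqrt s * ε) ^ 2 := by
    have h1 : μ A ≤ ∑ i, (μ (B' i) + 2 * ε * Real.sqrt (μ (B' i)) + ε ^ 2) := by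
      rw [hsum]; exact Finset.sum_le_sum fun i _ => hmoved i
    have h2 : ∑ i, (μ (B' i) + 2 * ε * Real.sqrt (μ (B' i)) + ε ^ 2)
        = (∑ i, μ (B' i)) + 2 * ε * (∑ i, Real.sqrt (μ (B' i))) + s * ε ^ 2 := by
      simp [Finset.sum_add_distrib, Finset.mul_sum]
    have hsq : Real.sqrt s ^ 2 = (s : ℝ) := Real.sq_sqrt (Nat.cast_nonneg s)
    nlinarith [Real.sq_sqrt hBnn, Real.sqrt_nonneg (μ B), Real.sqrt_nonneg (s:ℝ),
      mul_le_mul_of_nonneg_left hCS (by positivity : (0:ℝ) ≤ 2*ε)]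
  calc Real.sqrt (μ A) ≤ Real.sqrt ((Real.sqrt (μ B) + Real.sqrt s * ε) ^ 2) :=
        Real.sqrt_le_sqrt hμA
    _ = _ := Real.sqrt_sq (by positivity)
end

section
/- For every prime p and every l ≥ 1, the matrix algebra Mat_l(𝔽_p) is generated as a unital ring by the two elements A = Σ_{i=1}^{l-1} e_{i,i+1} + (-1)^{l-1} e_{l,1} (the signed cyclic permutation matrix) and B = e_{1,2} (the matrix unit). -/
/-!
Write `A` as the cyclic shift `e_{i,i+1}` weighted by units. Multiplying a matrix unit `e_{i,j}`
by `A` on the left gives a unit multiple of `e_{i-1,j}`, on the right one of `e_{i,j+1}`, so the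
subalgebra generated by `A` and `e_{1,2}` contains every matrix unit and is everything. Over
`ZMod p`, scalars are integer casts, so the subring generated by `A` and `B` is that subalgebra.
-/

open scoped Fin.NatCast in
theorem Fin.add_one_induction {n : ℕ} [NeZero n] {P : Fin n → Prop} {a : Fin n} (ha : P a)
    (h : ∀ i, P i → P (i + 1)) (i : Fin n) : P i := by
  have hP : ∀ k : ℕ, P (a + k) := fun k => by
    induction k with
    | zero => simpa using ha
    | succ k ih => simpa [add_assoc] using h _ ih
  simpa using hP (i - a).val

theorem Algebra.adjoin_zmod_toSubring {n : ℕ} {A : Type*} [Ring A] [Algebra (ZMod n) A]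
    (s : Set A) : (Algebra.adjoin (ZMod n) s).toSubring = Subring.closure s := by
  rw [Algebra.adjoin_eq_ring_closure]
  refine le_antisymm ?_ (Subring.closure_mono Set.subset_union_right)
  refine Subring.closure_le.2 (Set.union_subset ?_ Subring.subset_closure)
  rintro _ ⟨c, rfl⟩
  rw [← ZMod.intCast_zmod_cast c, map_intCast]
  exact intCast_mem (Subring.closure s) _

namespace Matrix

theorem single_mem_of_single_one_mem {R n : Type*} [CommRing R] [Fintype n] [DecidableEq n]
    {S : Subalgebra R (Matrix n n R)} {i j : n} (h : single i j (1 : R) ∈ S) (c : R) :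
    single i j c ∈ S := by
  simpa [smul_single] using S.smul_mem h c

variable {R : Type*} [CommRing R] {l : ℕ}

section CyclicShift

variable [NeZero l]

def cyclicShift (w : Fin l → R) : Matrix (Fin l) (Fin l) R :=
  of fun i j => if j = i + 1 then w i else 0

theorem cyclicShift_mul_single (w : Fin l → R) (i j : Fin l) (c : R) :
    cyclicShift w * single i j c = single (i - 1) j (w (i - 1) * c) := by
  ext r s
  simp only [cyclicShift, mul_apply, single_apply, of_apply, mul_ite, ite_mul, mul_zero,
    zero_mul, ite_and]
  simp only [Finset.sum_ite_eq, Finset.mem_univ, if_true, sub_eq_iff_eq_add]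
  split_ifs <;> simp_all

theorem single_mul_cyclicShift (w : Fin l → R) (i j : Fin l) (c : R) :
    single i j c * cyclicShift w = single i (j + 1) (c * w j) := by
  ext r s
  simp only [cyclicShift, mul_apply, single_apply, of_apply, mul_ite, ite_mul, mul_zero,
    zero_mul, ite_and]
  rw [Finset.sum_eq_single j (fun k _ hk => by simp [Ne.symm hk]) (by simp)]
  split_ifs <;> simp_all

variable {w : Fin l → R} {S : Subalgebra R (Matrix (Fin l) (Fin l) R)}

theorem single_add_one_mem (hw : ∀ i, IsUnit (w i)) (hA : cyclicShift w ∈ S) {i j : Fin l}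
    (h : single i j (1 : R) ∈ S) : single i (j + 1) (1 : R) ∈ S := by
  obtain ⟨u, hu⟩ := hw j
  have := S.mul_mem (single_mem_of_single_one_mem h ↑u⁻¹) hA
  rwa [single_mul_cyclicShift, ← hu, Units.inv_mul] at this

theorem single_sub_one_mem (hw : ∀ i, IsUnit (w i)) (hA : cyclicShift w ∈ S) {i j : Fin l}
    (h : single i j (1 : R) ∈ S) : single (i - 1) j (1 : R) ∈ S := by
  obtain ⟨u, hu⟩ := hw (i - 1)
  have := S.mul_mem hA (single_mem_of_single_one_mem h ↑u⁻¹)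
  rwa [cyclicShift_mul_single, ← hu, Units.mul_inv] at this

theorem subalgebra_eq_top_of_cyclicShift_mem (hw : ∀ i, IsUnit (w i)) (hA : cyclicShift w ∈ S)
    {i₀ j₀ : Fin l} (h₀ : single i₀ j₀ (1 : R) ∈ S) : S = ⊤ := by
  have hrow : ∀ j, single i₀ j (1 : R) ∈ S :=
    Fin.add_one_induction h₀ fun j => single_add_one_mem hw hA
  have hall : ∀ i j, single i j (1 : R) ∈ S := fun i j => by
    simpa using Fin.add_one_induction (P := fun i => single (-i) j (1 : R) ∈ S) (a := -i₀)
      (by simpa using hrow j) (fun i h => by simpa only [neg_add'] using single_sub_one_mem hw hA h)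
      (-i)
  refine eq_top_iff.2 fun M _ => ?_
  rw [matrix_eq_sum_single M]
  exact sum_mem fun i _ => sum_mem fun j _ => single_mem_of_single_one_mem (hall i j) _

theorem of_signed_cycle_eq_cyclicShift :
    (of fun i j : Fin l => if (i : ℕ) + 1 = (j : ℕ) then (1 : R)
      else if (i : ℕ) = l - 1 ∧ (j : ℕ) = 0 then (-1) ^ (l - 1) else 0) =
      cyclicShift fun i => if (i : ℕ) = l - 1 then (-1) ^ (l - 1) else 1 := by
  obtain ⟨n, rfl⟩ := Nat.exists_eq_add_one_of_ne_zero (NeZero.ne l)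
  ext i j
  simp only [cyclicShift, of_apply, Fin.ext_iff, Fin.val_add_one, Fin.val_last, Nat.add_sub_cancel]
  have := i.isLt; have := j.isLt
  split_ifs <;> first | rfl | (exfalso; omega)

theorem of_zero_one_eq_single (hl : 1 < l) :
    (of fun i j : Fin l => if (i : ℕ) = 0 ∧ (j : ℕ) = 1 then (1 : R) else 0) = single 0 1 1 := by
  ext i j
  simp only [of_apply, single_apply, Fin.ext_iff, Fin.val_zero, Fin.val_one', Nat.mod_eq_of_lt hl]
  simp only [eq_comm]

end CyclicShift

end Matrix

open Matrix in
theorem stmt_14_general (p : ℕ) (l : ℕ) :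
    letI A : Matrix (Fin l) (Fin l) (ZMod p) := Matrix.of fun i j =>
      if (i : ℕ) + 1 = (j : ℕ) then 1
      else if (i : ℕ) = l - 1 ∧ (j : ℕ) = 0 then (-1) ^ (l - 1) else 0
    letI B : Matrix (Fin l) (Fin l) (ZMod p) := Matrix.of fun i j =>
      if (i : ℕ) = 0 ∧ (j : ℕ) = 1 then 1 else 0
    Subring.closure {A, B} = ⊤ := by
  rw [← Algebra.adjoin_zmod_toSubring (n := p), Algebra.toSubring_eq_top]
  rcases Nat.eq_zero_or_pos l with rfl | hl
  · exact Subsingleton.elim _ _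
  have : NeZero l := ⟨hl.ne'⟩
  rw [of_signed_cycle_eq_cyclicShift]
  refine subalgebra_eq_top_of_cyclicShift_mem (fun i => ?_)
    (Algebra.subset_adjoin (Set.mem_insert _ _)) (i₀ := 0) (j₀ := 1) ?_
  · split_ifs
    exacts [isUnit_neg_one.pow _, isUnit_one]
  · rcases Nat.lt_or_eq_of_le hl with hl | rfl
    · rw [← of_zero_one_eq_single hl]
      exact Algebra.subset_adjoin (Set.mem_insert_of_mem _ rfl)
    · have : (single 0 1 1 : Matrix (Fin 1) (Fin 1) (ZMod p)) = 1 := by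
        ext i j
        fin_cases i; fin_cases j; rfl
      rw [this]
      exact one_mem _

theorem stmt_14 (p : ℕ) (hp : p.Prime) (l : ℕ) (hl : 1 ≤ l) :
    letI A : Matrix (Fin l) (Fin l) (ZMod p) := Matrix.of fun i j =>
      if (i : ℕ) + 1 = (j : ℕ) then 1
      else if (i : ℕ) = l - 1 ∧ (j : ℕ) = 0 then (-1) ^ (l - 1) else 0
    letI B : Matrix (Fin l) (Fin l) (ZMod p) := Matrix.of fun i j =>
      if (i : ℕ) = 0 ∧ (j : ℕ) = 1 then 1 else 0
    Subring.closure {A, B} = ⊤ :=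
  stmt_14_general p l
end

section
/- Let G be a group, H ≤ G a finite-index normal subgroup, and for indices i ≠ j let U_{ij} = {r ∈ R : Id + r·e_{ij} ∈ H}, where G = EL_d(R) ⊆ GL_d(R) for a commutative unital ring R and d ≥ 3. Then U := U_{ij} is a two-sided ideal of R independent of (i,j), and R/U is finite. -/
/-!
The commutator of the elementary matrices `e_ik(r)` and `e_kj(s)` (with `i, j, k` distinct) is
`e_ij(rs)`. Since `H` is normal, a commutator lies in `H` as soon as one of its two entries does.
Taking `r = 1` or `s = 1` moves membership of `e_ij(r)` in `H` along rows and columns, and `d ≥ 3`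
leaves room to reach every position `(k, l)`, so `U_ij` does not depend on `(i, j)`; general `r`
or `s` then shows that `U` absorbs multiplication. Finally `U` is the preimage of `H` under the
additive homomorphism `r ↦ e_ij(r)`, hence of finite index in `R`.
-/

/-- The group `EL_d(R)`: the subgroup of `GL_d(R)` generated by the elementary
matrices `Id + r·e_{ij}`, `i ≠ j`. -/
def EL (R : Type*) [CommRing R] (d : ℕ) : Subgroup (Matrix (Fin d) (Fin d) R)ˣ :=
  Subgroup.closure {u : (Matrix (Fin d) (Fin d) R)ˣ |
    ∃ (i j : Fin d) (r : R), i ≠ j ∧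
      (u : Matrix (Fin d) (Fin d) R) = 1 + Matrix.single i j r}

open scoped commutatorElement

theorem Subgroup.finiteIndex_comap {G G' : Type*} [Group G] [Group G'] (H : Subgroup G)
    [H.FiniteIndex] (f : G' →* G) : (H.comap f).FiniteIndex :=
  ⟨by simpa using
    relIndex_comap_ne_zero f (J := H) (K := ⊤) (by simpa using FiniteIndex.index_ne_zero)⟩

theorem Subgroup.commutatorElement_mem_of_left {G : Type*} [Group G] {H : Subgroup G} [H.Normal]
    {g : G} (hg : g ∈ H) (h : G) : ⁅g, h⁆ ∈ H := by
  rw [commutatorElement_def, mul_assoc, mul_assoc]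
  exact H.mul_mem hg (by simpa [mul_assoc] using ‹H.Normal›.conj_mem _ (H.inv_mem hg) h)

theorem Subgroup.commutatorElement_mem_of_right {G : Type*} [Group G] {H : Subgroup G} [H.Normal]
    (g : G) {h : G} (hh : h ∈ H) : ⁅g, h⁆ ∈ H := by
  rw [commutatorElement_def]
  exact H.mul_mem (‹H.Normal›.conj_mem _ hh g) (H.inv_mem hh)

namespace Matrix

variable {n R : Type*} [Fintype n] [DecidableEq n] [CommRing R]

theorem transvection_commutator {i j k : n} (hij : i ≠ j) (hik : i ≠ k) (hkj : k ≠ j) (r s : R) :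
    transvection i k r * transvection k j s * transvection i k (-r) * transvection k j (-s) =
      transvection i j (r * s) := by
  simp only [transvection, add_mul, mul_add, one_mul, mul_one, single_mul_single_same,
    single_mul_single_of_ne, hij.symm, hik.symm, hkj.symm, ne_eq,
    not_false_eq_true, ← single_neg, mul_neg, neg_mul, add_zero]
  abel

end Matrix

namespace EL

open Multiplicative

variable {R : Type*} [CommRing R] {d : ℕ} {i j k l : Fin d}

def transvection (hij : i ≠ j) : Multiplicative R →* EL R d where
  toFun r := ⟨⟨Matrix.transvection i j r.toAdd, Matrix.transvection i j (-r.toAdd),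
      by simp [Matrix.transvection_mul_transvection_same i j hij],
      by simp [Matrix.transvection_mul_transvection_same i j hij]⟩,
    Subgroup.subset_closure ⟨i, j, r.toAdd, hij, rfl⟩⟩
  map_one' := by ext : 2; simp
  map_mul' r s := by ext : 2; exact (Matrix.transvection_mul_transvection_same i j hij _ _).symm

@[simp]
theorem coe_transvection (hij : i ≠ j) (r : R) :
    (((transvection hij (ofAdd r) : EL R d) : (Matrix (Fin d) (Fin d) R)ˣ) :
      Matrix (Fin d) (Fin d) R) = Matrix.transvection i j r :=
  rfl

theorem eq_transvection_of_coe (hij : i ≠ j) {u : EL R d} {r : R}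
    (hu : ((u : (Matrix (Fin d) (Fin d) R)ˣ) : Matrix (Fin d) (Fin d) R) =
      1 + Matrix.single i j r) :
    u = transvection hij (ofAdd r) :=
  Subtype.ext (Units.ext hu)

theorem commutatorElement_transvection (hij : i ≠ j) (hik : i ≠ k) (hkj : k ≠ j) (r s : R) :
    ⁅transvection hik (ofAdd r), transvection hkj (ofAdd s)⁆ =
      transvection hij (ofAdd (r * s)) := by
  rw [commutatorElement_def, ← map_inv (transvection (R := R) hik),
    ← map_inv (transvection (R := R) hkj), ← ofAdd_neg, ← ofAdd_neg]
  ext : 2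
  exact Matrix.transvection_commutator hij hik hkj r s

variable {H : Subgroup (EL R d)} [H.Normal]

theorem transvection_mul_mem_of_left (hij : i ≠ j) (hik : i ≠ k) (hkj : k ≠ j) {r : R}
    (hr : transvection hik (ofAdd r) ∈ H) (s : R) : transvection hij (ofAdd (r * s)) ∈ H :=
  commutatorElement_transvection hij hik hkj r s ▸ Subgroup.commutatorElement_mem_of_left hr _

theorem transvection_mul_mem_of_right (hij : i ≠ j) (hik : i ≠ k) (hkj : k ≠ j) (r : R) {s : R}
    (hs : transvection hkj (ofAdd s) ∈ H) : transvection hij (ofAdd (r * s)) ∈ H :=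
  commutatorElement_transvection hij hik hkj r s ▸ Subgroup.commutatorElement_mem_of_right _ hs

theorem transvection_mem_of_mem_row (hij : i ≠ j) (hil : i ≠ l) {r : R}
    (hr : transvection hij (ofAdd r) ∈ H) : transvection hil (ofAdd r) ∈ H := by
  rcases eq_or_ne j l with rfl | hjl
  · exact hr
  · simpa using transvection_mul_mem_of_left hil hij hjl hr 1

theorem transvection_mem_of_mem_col (hij : i ≠ j) (hkj : k ≠ j) {r : R}
    (hr : transvection hij (ofAdd r) ∈ H) : transvection hkj (ofAdd r) ∈ H := by
  rcases eq_or_ne i k with rfl | hik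
  · exact hr
  · simpa using transvection_mul_mem_of_right hkj hik.symm hij 1 hr

theorem exists_ne_ne (hd : 3 ≤ d) (i j : Fin d) : ∃ k, i ≠ k ∧ k ≠ j := by
  obtain ⟨k, hk⟩ : ({i, j}ᶜ : Finset (Fin d)).Nonempty := by
    rw [← Finset.card_pos, Finset.card_compl, Fintype.card_fin]
    have := Finset.card_le_two (a := i) (b := j)
    omega
  simp only [Finset.mem_compl, Finset.mem_insert, Finset.mem_singleton, not_or] at hk
  exact ⟨k, Ne.symm hk.1, hk.2⟩

theorem transvection_mem_of_mem (hd : 3 ≤ d) (hij : i ≠ j) (hkl : k ≠ l) {r : R}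
    (hr : transvection hij (ofAdd r) ∈ H) : transvection hkl (ofAdd r) ∈ H := by
  obtain ⟨m, him, hmk⟩ := exists_ne_ne hd i k
  exact transvection_mem_of_mem_row hmk.symm hkl <|
    transvection_mem_of_mem_col him hmk.symm <| transvection_mem_of_mem_row hij him hr

variable (H) in
def levelIdeal (hd : 3 ≤ d) : Ideal R where
  carrier := {r | ∀ ⦃i j : Fin d⦄ (hij : i ≠ j), transvection hij (ofAdd r) ∈ H}
  add_mem' ha hb _ _ hij := by
    rw [ofAdd_add, map_mul]
    exact H.mul_mem (ha hij) (hb hij)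
  zero_mem' _ _ hij := by
    rw [ofAdd_zero, map_one]
    exact H.one_mem
  smul_mem' c _ hr i j hij := by
    obtain ⟨k, hik, hkj⟩ := exists_ne_ne hd i j
    exact transvection_mul_mem_of_right hij hik hkj c (hr hkj)

theorem mem_levelIdeal_iff (hd : 3 ≤ d) (hij : i ≠ j) {r : R} :
    r ∈ levelIdeal H hd ↔ transvection hij (ofAdd r) ∈ H :=
  ⟨fun hr => hr hij, fun hr _ _ hkl => transvection_mem_of_mem hd hij hkl hr⟩

theorem finite_quotient_levelIdeal [H.FiniteIndex] (hd : 3 ≤ d) :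
    Finite (R ⧸ levelIdeal H hd) := by
  have hij : (⟨0, by omega⟩ : Fin d) ≠ ⟨1, by omega⟩ := by simp
  have hU : (levelIdeal H hd).toAddSubgroup =
      Subgroup.toAddSubgroup' (H.comap (transvection hij)) := by
    ext r
    exact mem_levelIdeal_iff hd hij
  have : (levelIdeal H hd).toAddSubgroup.FiniteIndex := by
    rw [hU]
    exact ⟨(H.finiteIndex_comap (transvection hij)).index_ne_zero⟩
  exact AddSubgroup.finite_quotient_of_finiteIndex

end EL

open EL Multiplicative in
theorem stmt_16 {R : Type*} [CommRing R] (d : ℕ) (hd : 3 ≤ d)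
    (H : Subgroup (EL R d)) [H.Normal] [H.FiniteIndex] :
    ∃ U : Ideal R,
      (∀ (i j : Fin d), i ≠ j → ∀ r : R,
        (r ∈ U ↔ ∃ u : EL R d,
          ((u : (Matrix (Fin d) (Fin d) R)ˣ) : Matrix (Fin d) (Fin d) R) =
            1 + Matrix.single i j r ∧ u ∈ H)) ∧
      Finite (R ⧸ U) := by
  refine ⟨levelIdeal H hd, fun i j hij r => ?_, finite_quotient_levelIdeal hd⟩
  rw [mem_levelIdeal_iff hd hij]
  exact ⟨fun hr => ⟨_, coe_transvection hij r, hr⟩,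
    fun ⟨_, hu, huH⟩ => eq_transvection_of_coe hij hu ▸ huH⟩
end
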